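/- Let B^n = ∏_{i=1}^n [[b_i,1],[1,0]] be the path matrix with entries in the free noncommutative algebra over F_2, and let ℓ denote the number of monomials in the support. For every odd n ≥ 3, ℓ(1 + B^n_{22} + B^n_{21}·B^n_{12}) = F_{n-1} + F_n^2 − 1. -/

import Mathlib

/-- The free noncommutative algebra over `ZMod 2` on countably many
indeterminates, realized as the monoid algebra of the free monoid on `ℕ`. -/
noncomputable abbrev A := MonoidAlgebra (ZMod 2) (FreeMonoid ℕ)

/-- The `i`-th indeterminate `b_i`. -/
noncomputable def b (i : ℕ) : A := MonoidAlgebra.single (FreeMonoid.of i) 1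

/-- The elementary path matrix `[[b_i, 1], [1, 0]]`. -/
noncomputable def PM (i : ℕ) : Matrix (Fin 2) (Fin 2) A := !![b i, 1; 1, 0]

/-- The path matrix `B^n = ∏_{i=1}^n [[b_i, 1], [1, 0]]` (ordered product). -/
noncomputable def B (n : ℕ) : Matrix (Fin 2) (Fin 2) A :=
  ((List.range n).map (fun i => PM (i + 1))).prod

/-- The number of monomials in the support of `p`. -/
noncomputable def ell (p : A) : ℕ := p.coeff.support.card

/-!
Write `K_a^m = K(b_a, …, b_{a+m-1})` for the continuant. Then
`B^{m+2} = [[K_1^{m+2}, K_1^{m+1}], [K_2^{m+1}, K_2^m]]`, and by Euler's rule `K_a^m` is a sum of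
`F_{m+1}` distinct monomials; in each of them the letter in position `j` has the parity of `a + j`,
and the length has the parity of `m`. For `m` even, a product of a monomial of `K_2^m` with one of
`K_1^m` therefore remembers its factors (the cut is where the parity pattern first breaks), so
`K_2^m K_1^m` has `F_{m+1}^2` monomials, all of even length. For `n = m + 3` the monomials of
`K_2^{m+1}` have odd length, so in `1 + K_2^{m+1} + K_2^{m+2} K_1^{m+2}` the only cancellation is
that of the constant term.
-/

open Finset
open scoped Pointwise

instance {α : Type*} [DecidableEq α] : DecidableEq (FreeMonoid α) :=
  inferInstanceAs (DecidableEq (List α))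

namespace MonoidAlgebra

variable {k G : Type*} [Semiring k]

noncomputable def ofFinset (U : Finset G) : MonoidAlgebra k G := ∑ u ∈ U, single u 1

@[simp]
theorem ofFinset_singleton (g : G) : (ofFinset {g} : MonoidAlgebra k G) = single g 1 :=
  sum_singleton _ _

theorem support_coeff_ofFinset [Nontrivial k] [DecidableEq G] (U : Finset G) :
    (ofFinset U : MonoidAlgebra k G).coeff.support = U := by
  rw [ofFinset, coeff_sum, Finsupp.support_sum_eq_biUnion]
  · simp only [coeff_single, Finsupp.support_single _ one_ne_zero, biUnion_singleton_eq_self]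
  · intro g h hgh
    simpa only [coeff_single, Finsupp.support_single _ one_ne_zero] using
      disjoint_singleton.mpr hgh

theorem ofFinset_union [DecidableEq G] {U V : Finset G} (h : Disjoint U V) :
    (ofFinset (U ∪ V) : MonoidAlgebra k G) = ofFinset U + ofFinset V :=
  sum_union h

theorem ofFinset_mul [Mul G] [DecidableEq G] {U V : Finset G}
    (h : Set.InjOn (fun p : G × G => p.1 * p.2) (U ×ˢ V)) :
    (ofFinset (U * V) : MonoidAlgebra k G) = ofFinset U * ofFinset V := by
  rw [ofFinset, Finset.mul_def,
    sum_image fun p hp q hq => h (by simpa using hp) (by simpa using hq), sum_product,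
    ofFinset, ofFinset, sum_mul_sum]
  simp only [single_mul_single, mul_one]

theorem single_one_add_ofFinset [CharP k 2] [DecidableEq G] {U : Finset G} {g : G}
    (hg : g ∈ U) : single g 1 + ofFinset U = (ofFinset (U.erase g) : MonoidAlgebra k G) := by
  rw [ofFinset, ← add_sum_erase U _ hg, ← add_assoc, ← single_add, CharTwo.add_self_eq_zero,
    single_zero, zero_add, ofFinset]

end MonoidAlgebra

def ParityAlternatesFrom (a : ℕ) (l : List ℕ) : Prop :=
  ∀ j (h : j < l.length), l[j] % 2 = (a + j) % 2

namespace ParityAlternatesFrom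

variable {a c : ℕ}

theorem append_singleton {x : ℕ} {l : List ℕ} (hl : ParityAlternatesFrom a l)
    (hx : x % 2 = (a + l.length) % 2) : ParityAlternatesFrom a (l ++ [x]) := by
  intro j hj
  rw [List.length_append, List.length_singleton] at hj
  rcases Nat.lt_succ_iff_lt_or_eq.mp hj with hj | rfl
  · rw [List.getElem_append_left hj]
    exact hl j hj
  · simpa using hx

theorem mod_two_eq_of_append_eq {w v w' v' : List ℕ} (hw' : ParityAlternatesFrom a w')
    (hv : ParityAlternatesFrom c v) (h : w ++ v = w' ++ v') (hlt : w.length < w'.length) :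
    (a + w.length) % 2 = c % 2 := by
  have hv₀ : 0 < v.length := by
    have := congrArg List.length h
    simp only [List.length_append] at this
    omega
  have hhead : v[0] = w'[w.length] :=
    calc v[0] = (w ++ v)[w.length]'(by simpa using hv₀) := by simp
      _ = (w' ++ v')[w.length]'(by simpa [← h] using hv₀) := by simp_rw [h]
      _ = w'[w.length] := List.getElem_append_left hlt
  have := hv 0 hv₀
  have := hw' w.length hlt
  omega

theorem append_inj {w v w' v' : List ℕ} (hw : ParityAlternatesFrom a w)
    (hw' : ParityAlternatesFrom a w') (hv : ParityAlternatesFrom c v)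
    (hv' : ParityAlternatesFrom c v') (hlen : w.length % 2 = w'.length % 2)
    (hac : (a + w.length) % 2 ≠ c % 2) (h : w ++ v = w' ++ v') : w = w' ∧ v = v' := by
  refine List.append_inj h ?_
  rcases lt_trichotomy w.length w'.length with hlt | heq | hgt
  · exact absurd (hw'.mod_two_eq_of_append_eq hv h hlt) hac
  · exact heq
  · have := hw.mod_two_eq_of_append_eq hv' h.symm hgt
    omega

end ParityAlternatesFrom

open FreeMonoid

def contWords : ℕ → ℕ → Finset (FreeMonoid ℕ)
  | _, 0 => {1}
  | a, 1 => {of a}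
  | a, m + 2 => contWords a (m + 1) * {of (a + m + 1)} ∪ contWords a m

theorem mem_contWords_add_two {a m : ℕ} {w : FreeMonoid ℕ} :
    w ∈ contWords a (m + 2) ↔
      (∃ u ∈ contWords a (m + 1), u * of (a + m + 1) = w) ∨ w ∈ contWords a m := by
  simp only [contWords, mem_union, Finset.mem_mul, mem_singleton, exists_eq_left]

theorem length_mod_two_of_mem_contWords :
    ∀ {a m : ℕ} {w : FreeMonoid ℕ}, w ∈ contWords a m → w.length % 2 = m % 2
  | _, 0, _, hw => by simp_all [contWords]
  | _, 1, _, hw => by simp_all [contWords]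
  | _, _ + 2, _, hw => by
    rcases mem_contWords_add_two.mp hw with ⟨u, hu, rfl⟩ | hw
    · have := length_mod_two_of_mem_contWords hu
      rw [length_mul, length_of]
      omega
    · have := length_mod_two_of_mem_contWords hw
      omega

theorem lt_of_mem_of_mem_contWords :
    ∀ {a m x : ℕ} {w : FreeMonoid ℕ}, w ∈ contWords a m → x ∈ w → x < a + m
  | _, 0, _, _, hw, hx => by simp_all [contWords, notMem_one]
  | _, 1, _, _, hw, hx => by simp_all [contWords]
  | _, _ + 2, _, _, hw, hx => by
    rcases mem_contWords_add_two.mp hw with ⟨u, hu, rfl⟩ | hw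
    · rcases FreeMonoid.mem_mul.mp hx with hx | hx
      · have := lt_of_mem_of_mem_contWords hu hx
        omega
      · rw [mem_of.mp hx]
        omega
    · have := lt_of_mem_of_mem_contWords hw hx
      omega

theorem parityAlternatesFrom_of_mem_contWords :
    ∀ {a m : ℕ} {w : FreeMonoid ℕ}, w ∈ contWords a m → ParityAlternatesFrom a w.toList
  | _, 0, _, hw => by simp_all [contWords, ParityAlternatesFrom]
  | _, 1, _, hw => by simp_all [contWords, ParityAlternatesFrom]
  | _, _ + 2, _, hw => by
    rcases mem_contWords_add_two.mp hw with ⟨u, hu, rfl⟩ | hw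
    · have := length_mod_two_of_mem_contWords hu
      rw [toList_mul, toList_of]
      exact (parityAlternatesFrom_of_mem_contWords hu).append_singleton (by rw [← length]; omega)
    · exact parityAlternatesFrom_of_mem_contWords hw

theorem disjoint_contWords (a m : ℕ) :
    Disjoint (contWords a (m + 1) * {of (a + m + 1)}) (contWords a m) := by
  refine disjoint_left.mpr fun w hw hw' => ?_
  obtain ⟨u, -, _, hz, rfl⟩ := Finset.mem_mul.mp hw
  rw [mem_singleton.mp hz] at hw'
  have := lt_of_mem_of_mem_contWords hw' (FreeMonoid.mem_mul.mpr (Or.inr mem_of_self))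
  omega

theorem card_contWords : ∀ a m : ℕ, #(contWords a m) = Nat.fib (m + 1)
  | _, 0 => rfl
  | _, 1 => rfl
  | a, m + 2 => by
    rw [contWords, card_union_of_disjoint (disjoint_contWords a m), card_mul_singleton,
      card_contWords a (m + 1), card_contWords a m, Nat.fib_add_two (n := m + 1), add_comm]

theorem one_mem_contWords : ∀ {a m : ℕ}, Even m → (1 : FreeMonoid ℕ) ∈ contWords a m
  | _, 0, _ => mem_singleton_self 1
  | _, 1, h => absurd h (by decide)
  | _, m + 2, hm =>
    mem_union_right _ (one_mem_contWords (m := m) (by simpa [Nat.even_add] using hm))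

theorem disjoint_contWords_mul {a c d m m' m'' : ℕ} (h : m % 2 ≠ (m' + m'') % 2) :
    Disjoint (contWords a m) (contWords c m' * contWords d m'') := by
  refine disjoint_left.mpr fun w hw hw' => ?_
  obtain ⟨u, hu, v, hv, rfl⟩ := Finset.mem_mul.mp hw'
  have := length_mod_two_of_mem_contWords hw
  have := length_mod_two_of_mem_contWords hu
  have := length_mod_two_of_mem_contWords hv
  rw [length_mul] at *
  omega

theorem injOn_mul_contWords {a c m m' : ℕ} (h : (a + m) % 2 ≠ c % 2) :
    Set.InjOn (fun p : FreeMonoid ℕ × FreeMonoid ℕ => p.1 * p.2)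
      (contWords a m ×ˢ contWords c m') := by
  rintro ⟨w, v⟩ ⟨hw, hv⟩ ⟨w', v'⟩ ⟨hw', hv'⟩ hwv
  have hlen := length_mod_two_of_mem_contWords hw
  obtain ⟨rfl, rfl⟩ := (parityAlternatesFrom_of_mem_contWords hw).append_inj
    (parityAlternatesFrom_of_mem_contWords hw') (parityAlternatesFrom_of_mem_contWords hv)
    (parityAlternatesFrom_of_mem_contWords hv')
    (hlen.trans (length_mod_two_of_mem_contWords hw').symm) (by rw [← length]; omega)
    (congrArg FreeMonoid.toList hwv)
  rfl

-- `K_a^m = K(b_a, …, b_{a+m-1})`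
noncomputable def continuant (a m : ℕ) : A := MonoidAlgebra.ofFinset (contWords a m)

theorem continuant_zero (a : ℕ) : continuant a 0 = 1 :=
  MonoidAlgebra.ofFinset_singleton 1

theorem continuant_one (a : ℕ) : continuant a 1 = b a :=
  MonoidAlgebra.ofFinset_singleton (of a)

theorem continuant_add_two (a m : ℕ) :
    continuant a (m + 2) = continuant a (m + 1) * b (a + m + 1) + continuant a m := by
  rw [continuant, contWords, MonoidAlgebra.ofFinset_union (disjoint_contWords a m),
    MonoidAlgebra.ofFinset_mul ?inj, MonoidAlgebra.ofFinset_singleton, continuant, continuant, b]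
  case inj =>
    rintro ⟨u, _⟩ ⟨-, hg⟩ ⟨u', _⟩ ⟨-, hg'⟩ h
    rw [coe_singleton, Set.mem_singleton_iff] at hg hg'
    subst hg hg'
    exact Prod.ext (mul_right_cancel h) rfl

theorem B_succ (n : ℕ) : B (n + 1) = B n * PM (n + 1) := by
  rw [B, List.range_succ, List.map_append, List.prod_append, List.map_singleton,
    List.prod_singleton, B]

theorem B_add_two (m : ℕ) :
    B (m + 2) = !![continuant 1 (m + 2), continuant 1 (m + 1);
      continuant 2 (m + 1), continuant 2 m] := by
  induction m with
  | zero =>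
    rw [B_succ, B_succ, show B 0 = 1 from rfl, one_mul, PM, PM, Matrix.mul_fin_two,
      continuant_add_two 1 0]
    simp [continuant_zero, continuant_one]
  | succ m ih =>
    rw [B_succ, ih, PM, Matrix.mul_fin_two, continuant_add_two 1 (m + 1), continuant_add_two 2 m,
      show 1 + (m + 1) + 1 = m + 2 + 1 by omega, show 2 + m + 1 = m + 2 + 1 by omega]
    simp

/-- For odd , the length of  is
. -/
theorem length_differential_a2 (n : ℕ) (hn : 3 ≤ n) (hodd : Odd n) :
    ell (1 + B n 1 1 + B n 1 0 * B n 0 1) = Nat.fib (n - 1) + (Nat.fib n) ^ 2 - 1 := by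
  obtain ⟨m, rfl⟩ : ∃ m, n = m + 1 + 2 := ⟨n - 3, by omega⟩
  have hm : (m + 2) % 2 = 0 := by
    have := Nat.odd_iff.mp hodd
    omega
  set T := contWords 2 (m + 2) * contWords 1 (m + 2)
  have hinj : Set.InjOn (fun p : FreeMonoid ℕ × FreeMonoid ℕ => p.1 * p.2)
      (contWords 2 (m + 2) ×ˢ contWords 1 (m + 2)) := injOn_mul_contWords (by omega)
  have hT : (1 : FreeMonoid ℕ) ∈ T :=
    mem_mul.mpr ⟨1, one_mem_contWords (Nat.even_iff.mpr hm), 1,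
      one_mem_contWords (Nat.even_iff.mpr hm), one_mul 1⟩
  have hdisj : Disjoint (contWords 2 (m + 1)) (T.erase 1) :=
    (disjoint_contWords_mul (by omega)).mono_right (erase_subset 1 T)
  have key : 1 + B (m + 1 + 2) 1 1 + B (m + 1 + 2) 1 0 * B (m + 1 + 2) 0 1 =
      MonoidAlgebra.ofFinset (contWords 2 (m + 1) ∪ T.erase 1) := by
    simp only [B_add_two, Matrix.of_apply, Matrix.cons_val', Matrix.cons_val_zero,
      Matrix.cons_val_one, Matrix.empty_val', Matrix.cons_val_fin_one, continuant]
    rw [← MonoidAlgebra.ofFinset_mul hinj,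
      MonoidAlgebra.ofFinset_union hdisj, ← MonoidAlgebra.single_one_add_ofFinset hT,
      MonoidAlgebra.one_def]
    abel
  rw [ell, key, MonoidAlgebra.support_coeff_ofFinset, card_union_of_disjoint hdisj,
    card_erase_of_mem hT, ← Nat.add_sub_assoc (card_pos.mpr ⟨1, hT⟩), card_mul_iff.mpr hinj,
    card_contWords, card_contWords, card_contWords, sq]
  rfl
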